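/- arXiv:1910.07287 — 8 statements merged into one kernel-verified Lean document; each statement's English description precedes it below -/
import Mathlib

section
/- The restriction of exp_p to the tangent space T_0 = {v ∈ ℝ^c : ∑ v_i = 0} is a bijection from T_0 onto the open simplex S, with inverse given by exp_p^{-1}(q) = Π_0[log(q/p)], where Π_0 is the orthogonal projection onto T_0 and log and division are componentwise. -/
open Finset Real

/-- The open probability simplex in ℝ^c. -/
def simplexS (c : ℕ) : Set (Fin c → ℝ) := {p | (∀ i, 0 < p i) ∧ ∑ i, p i = 1}

/-- Tangent space: vectors with zero coordinate sum. -/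
def T0 (c : ℕ) : Set (Fin c → ℝ) := {v | ∑ i, v i = 0}

/-- Orthogonal projection onto T0. -/
noncomputable def proj0 {c : ℕ} (u : Fin c → ℝ) : Fin c → ℝ :=
  fun i => u i - (∑ j, u j) / c

/-- exp_p(v) = (p ⊙ e^v)/⟨p, e^v⟩. -/
noncomputable def expMap {c : ℕ} (p v : Fin c → ℝ) : Fin c → ℝ :=
  fun i => p i * Real.exp (v i) / ∑ j, p j * Real.exp (v j)

/-- Inverse of exp_p restricted to T0: exp_p⁻¹(q) = Π₀[log(q/p)]. -/
noncomputable def expInv {c : ℕ} (p q : Fin c → ℝ) : Fin c → ℝ :=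
  proj0 (fun i => Real.log (q i / p i))

/-- R_q[u] = q ⊙ u − ⟨q,u⟩ q. -/
def Rmap {c : ℕ} (q u : Fin c → ℝ) : Fin c → ℝ :=
  fun i => q i * u i - (∑ j, q j * u j) * q i

/-- Barycenter 𝟙ₛ = (1/c,…,1/c). -/
noncomputable def bary (c : ℕ) : Fin c → ℝ := fun _ => 1 / c

/-!
`exp_p` is unchanged when a constant is added to `v`, and `log (exp_p v / p) = v - log ⟨p, e^v⟩`
differs from `v` by a constant. So `exp_p` and `q ↦ log (q / p)` are mutually inverse up to
constants, and `Π₀`, which kills constants and fixes `T₀`, selects the representative in `T₀`.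
-/

lemma pos_of_mem_simplexS {c : ℕ} {p : Fin c → ℝ} (hp : p ∈ simplexS c) : 0 < c := by
  refine Nat.pos_of_ne_zero fun hc => ?_
  subst hc
  simp [simplexS] at hp

section Projection

variable {c : ℕ}

lemma proj0_mem_T0 (hc : c ≠ 0) (u : Fin c → ℝ) : proj0 u ∈ T0 c := by
  have hcR : (c : ℝ) ≠ 0 := Nat.cast_ne_zero.mpr hc
  show ∑ i, proj0 u i = 0
  simp only [proj0, sum_sub_distrib, sum_const, card_univ,
    Fintype.card_fin, nsmul_eq_mul]
  field_simp
  ring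

lemma proj0_sub_const (hc : c ≠ 0) (u : Fin c → ℝ) (a : ℝ) :
    proj0 (fun i => u i - a) = proj0 u := by
  have hcR : (c : ℝ) ≠ 0 := Nat.cast_ne_zero.mpr hc
  funext i
  simp only [proj0, sum_sub_distrib, sum_const, card_univ, Fintype.card_fin, nsmul_eq_mul]
  field_simp
  ring

lemma proj0_eq_self {v : Fin c → ℝ} (hv : v ∈ T0 c) : proj0 v = v := by
  funext i
  simp [proj0, show ∑ j, v j = 0 from hv]

end Projection

section ExpMap

variable {c : ℕ} {p : Fin c → ℝ}

lemma sum_mul_exp_pos (hp : ∀ i, 0 < p i) (hc : 0 < c) (v : Fin c → ℝ) :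
    0 < ∑ j, p j * exp (v j) :=
  sum_pos (fun j _ => mul_pos (hp j) (exp_pos _)) ⟨⟨0, hc⟩, mem_univ _⟩

lemma expMap_mem_simplexS (hp : ∀ i, 0 < p i) (hc : 0 < c) (v : Fin c → ℝ) :
    expMap p v ∈ simplexS c := by
  have hZ := sum_mul_exp_pos hp hc v
  refine ⟨fun i => div_pos (mul_pos (hp i) (exp_pos _)) hZ, ?_⟩
  simp only [expMap, ← sum_div, div_self hZ.ne']

lemma expMap_sub_const (p u : Fin c → ℝ) (a : ℝ) :
    expMap p (fun i => u i - a) = expMap p u := by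
  funext i
  simp only [expMap, exp_sub, mul_div_assoc', ← sum_div]
  rw [div_div_div_cancel_right₀ (exp_ne_zero a)]

lemma log_expMap_div (hp : ∀ i, 0 < p i) (hc : 0 < c) (v : Fin c → ℝ) :
    (fun i => log (expMap p v i / p i)) = fun i => v i - log (∑ j, p j * exp (v j)) := by
  have hZ := sum_mul_exp_pos hp hc v
  funext i
  have hratio : expMap p v i / p i = exp (v i) / ∑ j, p j * exp (v j) := by
    rw [expMap, div_right_comm, mul_div_cancel_left₀ _ (hp i).ne']
  rw [hratio, log_div (exp_ne_zero _) hZ.ne', log_exp]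

lemma expMap_log_div (hp : ∀ i, 0 < p i) {q : Fin c → ℝ} (hq : q ∈ simplexS c) :
    expMap p (fun i => log (q i / p i)) = q := by
  have hpq (i : Fin c) : p i * exp (log (q i / p i)) = q i := by
    rw [exp_log (div_pos (hq.1 i) (hp i)), mul_div_cancel₀ _ (hp i).ne']
  funext i
  simp only [expMap, hpq, hq.2, div_one]

end ExpMap

theorem stmt1 {c : ℕ} (p : Fin c → ℝ) (hp : p ∈ simplexS c) :
    (∀ v ∈ T0 c, expMap p v ∈ simplexS c ∧ expInv p (expMap p v) = v) ∧
    (∀ q ∈ simplexS c, expInv p q ∈ T0 c ∧ expMap p (expInv p q) = q) := by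
  have hc := pos_of_mem_simplexS hp
  refine ⟨fun v hv => ⟨expMap_mem_simplexS hp.1 hc v, ?_⟩,
    fun q hq => ⟨proj0_mem_T0 hc.ne' _, ?_⟩⟩
  · rw [expInv, log_expMap_div hp.1 hc, proj0_sub_const hc.ne', proj0_eq_self hv]
  · -- `expInv p q` unfolds to `log (q / p)` minus a constant
    exact (expMap_sub_const p _ _).trans (expMap_log_div hp.1 hq)
end

section
/- The map exp : ℝ^c × S → S, (v, p) ↦ exp_p(v), is a group action of the additive group ℝ^c on the open simplex S: exp_p(0) = p and exp_p(v + u) = exp_{exp_p(u)}(v) for all v, u ∈ ℝ^c and p ∈ S. -/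
open Finset Real

theorem stmt2 {c : ℕ} (p : Fin c → ℝ) (hp : p ∈ simplexS c) :
    expMap p 0 = p ∧
    ∀ v u : Fin c → ℝ, expMap p (v + u) = expMap (expMap p u) v := by
  obtain ⟨hpos, hsum⟩ := hp
  have hS : ∀ w : Fin c → ℝ, 0 < ∑ j, p j * Real.exp (w j) := by
    intro w
    rcases Nat.eq_zero_or_pos c with hc | hc
    · subst hc; exact absurd hsum (by simp)
    · exact Finset.sum_pos (fun j _ => mul_pos (hpos j) (Real.exp_pos _))
        (by rw [Finset.univ_nonempty_iff]; exact ⟨⟨0, hc⟩⟩)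
  constructor
  · funext i
    simp [expMap, hsum]
  · intro v u
    funext i
    have hSu : (∑ j, p j * Real.exp (u j)) ≠ 0 := (hS u).ne'
    have key : ∑ j, p j * Real.exp (u j) / (∑ k, p k * Real.exp (u k)) * Real.exp (v j)
        = (∑ j, p j * Real.exp (v j + u j)) / (∑ k, p k * Real.exp (u k)) := by
      rw [Finset.sum_div]
      refine Finset.sum_congr rfl fun j _ => ?_
      rw [Real.exp_add]; ring
    have h1 : (0:ℝ) < ∑ j, p j * (Real.exp (v j) * Real.exp (u j)) := by
      simpa [Real.exp_add] using hS (fun j => v j + u j)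
    have h1' := h1.ne'
    simp only [expMap, Pi.add_apply, key, Real.exp_add]
    field_simp
end

section
/- For all p, q, a ∈ S, exp_q^{-1}(a) = exp_p^{-1}(a) − exp_p^{-1}(q), where exp_p^{-1}(q) = Π_0[log(q/p)]. -/
open Finset Real

theorem stmt5 {c : ℕ} (p q a : Fin c → ℝ) (hp : p ∈ simplexS c) (hq : q ∈ simplexS c)
    (ha : a ∈ simplexS c) :
    expInv q a = expInv p a - expInv p q := by
  have key : ∀ i, Real.log (a i / q i) = Real.log (a i / p i) - Real.log (q i / p i) := by
    intro i
    rw [Real.log_div (ne_of_gt (ha.1 i)) (ne_of_gt (hq.1 i)),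
        Real.log_div (ne_of_gt (ha.1 i)) (ne_of_gt (hp.1 i)),
        Real.log_div (ne_of_gt (hq.1 i)) (ne_of_gt (hp.1 i))]
    ring
  funext i
  simp only [expInv, proj0, Pi.sub_apply, key, Finset.sum_sub_distrib]
  ring
end

section
/- For q ∈ S, the linear map R_q : ℝ^c → ℝ^c defined by R_q[u] = q ⊙ u − ⟨q, u⟩ q maps T_0 bijectively onto T_0, with inverse given by u ↦ Π_0[u / q] (componentwise division). -/
open Finset Real

theorem stmt6 {c : ℕ} (q : Fin c → ℝ) (hq : q ∈ simplexS c) :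
    (∀ u ∈ T0 c, Rmap q u ∈ T0 c ∧ proj0 (fun i => Rmap q u i / q i) = u) ∧
    (∀ u ∈ T0 c, Rmap q (proj0 (fun i => u i / q i)) = u) := by
  obtain ⟨hpos, hsum⟩ := hq
  have hc : (c : ℝ) ≠ 0 := by
    rcases Nat.eq_zero_or_pos c with h | h
    · subst h; simp at hsum
    · exact Nat.cast_ne_zero.mpr h.ne'
  have hqne : ∀ i, q i ≠ 0 := fun i => (hpos i).ne'
  constructor
  · intro u hu
    have hu0 : ∑ i, u i = 0 := hu
    set S := ∑ j, q j * u j with hS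
    constructor
    · show ∑ i, (q i * u i - S * q i) = 0
      rw [Finset.sum_sub_distrib, ← Finset.mul_sum, hsum, mul_one, sub_self]
    · funext i
      have hdiv : ∀ j, Rmap q u j / q j = u j - S := by
        intro j
        show (q j * u j - (∑ k, q k * u k) * q j) / q j = u j - S
        rw [show q j * u j - (∑ k, q k * u k) * q j = (u j - S) * q j from by rw [hS]; ring,
          mul_div_cancel_right₀ _ (hqne j)]
      simp only [proj0, hdiv]
      rw [Finset.sum_sub_distrib, hu0]
      simp only [zero_sub, Finset.sum_const, Finset.card_univ, Fintype.card_fin, nsmul_eq_mul]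
      rw [neg_div, mul_div_cancel_left₀ _ hc]
      ring
  · intro u hu
    have hu0 : ∑ i, u i = 0 := hu
    set M := (∑ j, u j / q j) / (c : ℝ) with hM
    have hv : ∀ j, proj0 (fun i => u i / q i) j = u j / q j - M := fun j => rfl
    have hsum2 : (∑ j, q j * (u j / q j - M)) = -M := by
      have : ∀ j, q j * (u j / q j - M) = u j - M * q j := by
        intro j
        rw [mul_sub, ← mul_div_assoc, mul_div_cancel_left₀ _ (hqne j)]; ring
      simp only [this]
      rw [Finset.sum_sub_distrib, hu0, ← Finset.mul_sum, hsum, mul_one, zero_sub]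
    funext i
    show q i * (u i / q i - M) - (∑ j, q j * (u j / q j - M)) * q i = u i
    rw [hsum2]
    have key : q i * (u i / q i) = u i := by
      rw [← mul_div_assoc, mul_div_cancel_left₀ _ (hqne i)]
    rw [mul_sub, key]
    ring
end

section
/- Under the similarity map with row-stochastic weights, each component satisfies S_i(W) = exp_𝟙ₛ( ∑_{j∈N_i} ω_{ij} ( exp_𝟙ₛ^{-1}(W_j) − (1/ρ) D_j ) ), where 𝟙ₛ = (1/c,…,1/c) is the barycenter. -/
open Finset Real

/-- The i-th component of the similarity map, in the form
S_i(W) = exp_{𝟙ₛ}( ∑_{j∈N_i} ω_{ij}(exp_{𝟙ₛ}⁻¹(W_j) − D_j/ρ) ). -/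
noncomputable def Sim {n c : ℕ} (N : Fin n → Finset (Fin n)) (ω : Fin n → Fin n → ℝ)
    (D : Fin n → Fin c → ℝ) (ρ : ℝ) (W : Fin n → Fin c → ℝ) (i : Fin n) : Fin c → ℝ :=
  expMap (bary c) (∑ j ∈ N i, ω i j • (expInv (bary c) (W j) - ρ⁻¹ • D j))

/-- Exp_p(v) = (p ⊙ e^{v/p})/⟨p, e^{v/p}⟩. -/
noncomputable def ExpMap {c : ℕ} (p v : Fin c → ℝ) : Fin c → ℝ :=
  fun i => p i * Real.exp (v i / p i) / ∑ j, p j * Real.exp (v j / p j)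

/-- Exp_p⁻¹(q) = R_p[log(q/p)]. -/
noncomputable def ExpInv {c : ℕ} (p q : Fin c → ℝ) : Fin c → ℝ :=
  Rmap p (fun i => Real.log (q i / p i))

/-! Both sides are softmax vectors `expMap 1 v`, and `expMap p v` depends only on `log p + v`
up to an additive constant. So it suffices that the two log-potentials agree, up to constants,
with `∑ j, ω i j • (log W_j - D_j / ρ)`. On the left, `Exp_p (∑ ω_j Exp_p⁻¹ q_j)` is the normalized
weighted geometric mean of the `q_j` for every base point `p` (this is where `∑ ω_j = 1` enters),
and `log exp_{W_j}(-D_j / ρ) = log W_j - D_j / ρ` up to a constant; on the right, the centring in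
`exp_𝟙ₛ⁻¹` and the constant base point `𝟙ₛ` only contribute constants. -/

def EqUpToConst {ι : Type*} (v w : ι → ℝ) : Prop := ∃ a : ℝ, ∀ i, v i = w i + a

infix:50 " =ᶜ " => EqUpToConst

namespace EqUpToConst

variable {ι : Type*} {u v w : ι → ℝ}

theorem symm (h : v =ᶜ w) : w =ᶜ v :=
  let ⟨a, ha⟩ := h
  ⟨-a, fun i => by rw [ha i]; ring⟩

theorem trans (h₁ : u =ᶜ v) (h₂ : v =ᶜ w) : u =ᶜ w :=
  let ⟨a, ha⟩ := h₁
  let ⟨b, hb⟩ := h₂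
  ⟨b + a, fun i => by rw [ha i, hb i, add_assoc]⟩

instance : @Trans (ι → ℝ) (ι → ℝ) (ι → ℝ) EqUpToConst EqUpToConst EqUpToConst := ⟨trans⟩

theorem add_right (h : v =ᶜ w) (u : ι → ℝ) : v + u =ᶜ w + u :=
  let ⟨a, ha⟩ := h
  ⟨a, fun i => by simp only [Pi.add_apply, ha i]; ring⟩

theorem sum_smul {κ : Type*} (s : Finset κ) (ω : κ → ℝ) {f g : κ → ι → ℝ}
    (h : ∀ j ∈ s, f j =ᶜ g j) :
    ∑ j ∈ s, ω j • f j =ᶜ ∑ j ∈ s, ω j • g j := by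
  choose! a ha using h
  refine ⟨∑ j ∈ s, ω j * a j, fun i => ?_⟩
  simp only [Finset.sum_apply, Pi.smul_apply, smul_eq_mul, ← sum_add_distrib, ← mul_add]
  exact sum_congr rfl fun j hj => by rw [ha j hj i]

end EqUpToConst

section SimplexMaps

variable {c : ℕ}

theorem expMap_congr {p v w : Fin c → ℝ} (h : v =ᶜ w) : expMap p v = expMap p w := by
  obtain ⟨a, ha⟩ := h
  have hscale : ∀ i, p i * exp (v i) = exp a * (p i * exp (w i)) := fun i => by
    rw [ha i, exp_add]; ring
  ext i
  simp only [expMap, hscale, ← mul_sum]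
  exact mul_div_mul_left _ _ (exp_pos a).ne'

theorem expMap_eq_expMap_one {p : Fin c → ℝ} (hp : ∀ i, 0 < p i) (v : Fin c → ℝ) :
    expMap p v = expMap 1 (log ∘ p + v) := by
  have hp' : ∀ i, p i * exp (v i) = 1 * exp ((log ∘ p + v) i) := fun i => by
    simp only [Pi.add_apply, Function.comp_apply, exp_add, exp_log (hp i), one_mul]
  ext i
  simp only [expMap, hp', Pi.one_apply]

theorem expMap_bary (v : Fin c → ℝ) : expMap (bary c) v = expMap 1 v := by
  ext i
  have hc : (c : ℝ) ≠ 0 := Nat.cast_ne_zero.mpr i.pos.ne'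
  simp only [expMap, bary, Pi.one_apply, one_mul, ← mul_sum]
  exact mul_div_mul_left _ _ (one_div_ne_zero hc)

theorem expMap_pos {p : Fin c → ℝ} (hp : ∀ i, 0 < p i) (v : Fin c → ℝ) (i : Fin c) :
    0 < expMap p v i :=
  div_pos (mul_pos (hp i) (exp_pos _))
    (sum_pos (fun j _ => mul_pos (hp j) (exp_pos _)) ⟨i, mem_univ i⟩)

theorem log_expMap_eqUpToConst {p : Fin c → ℝ} (hp : ∀ i, 0 < p i) (v : Fin c → ℝ) :
    log ∘ expMap p v =ᶜ log ∘ p + v := by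
  refine ⟨-log (∑ j, p j * exp (v j)), fun i => ?_⟩
  have hsum : 0 < ∑ j, p j * exp (v j) :=
    sum_pos (fun j _ => mul_pos (hp j) (exp_pos _)) ⟨i, mem_univ i⟩
  simp only [Function.comp_apply, Pi.add_apply, expMap]
  rw [log_div (mul_pos (hp i) (exp_pos _)).ne' hsum.ne', log_mul (hp i).ne' (exp_pos _).ne',
    log_exp, sub_eq_add_neg]

theorem expInv_eqUpToConst (p q : Fin c → ℝ) :
    expInv p q =ᶜ fun i => log (q i / p i) :=
  ⟨-(∑ j, log (q j / p j)) / c, fun i => by simp only [expInv, proj0]; ring⟩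

theorem log_div_bary_eqUpToConst {q : Fin c → ℝ} (hq : ∀ i, q i ≠ 0) :
    (fun i => log (q i / bary c i)) =ᶜ log ∘ q :=
  ⟨log c, fun i => by
    have hc : (c : ℝ) ≠ 0 := Nat.cast_ne_zero.mpr i.pos.ne'
    simp only [bary, Function.comp_apply]
    rw [div_div_eq_mul_div, div_one, log_mul (hq i) hc]⟩

theorem Rmap_div_eqUpToConst {p : Fin c → ℝ} (hp : ∀ i, p i ≠ 0) (u : Fin c → ℝ) :
    Rmap p u / p =ᶜ u :=
  ⟨-∑ j, p j * u j, fun i => by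
    simp only [Rmap, Pi.div_apply]
    field_simp [hp i]
    ring⟩

theorem sum_smul_Rmap {κ : Type*} (s : Finset κ) (ω : κ → ℝ) (p : Fin c → ℝ)
    (u : κ → Fin c → ℝ) :
    ∑ j ∈ s, ω j • Rmap p (u j) = Rmap p (∑ j ∈ s, ω j • u j) := by
  ext i
  simp only [Rmap, Finset.sum_apply, Pi.smul_apply, smul_eq_mul, mul_sub, mul_sum, sum_mul,
    sum_sub_distrib]
  rw [sum_comm (s := s)]
  congr 1 <;> refine sum_congr rfl fun _ _ => ?_
  · ring
  · exact sum_congr rfl fun _ _ => by ring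

theorem ExpMap_sum_smul_ExpInv {κ : Type*} {s : Finset κ} {ω : κ → ℝ} {p : Fin c → ℝ}
    {q : κ → Fin c → ℝ} (hp : ∀ i, 0 < p i) (hq : ∀ j ∈ s, ∀ i, 0 < q j i)
    (hω : ∑ j ∈ s, ω j = 1) :
    ExpMap p (∑ j ∈ s, ω j • ExpInv p (q j)) = expMap 1 (∑ j ∈ s, ω j • (log ∘ q j)) := by
  set u : Fin c → ℝ := ∑ j ∈ s, ω j • fun i => log (q j i / p i)
  have hlog : log ∘ p + u = ∑ j ∈ s, ω j • (log ∘ q j) := by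
    ext i
    simp only [u, Pi.add_apply, Function.comp_apply, Finset.sum_apply, Pi.smul_apply, smul_eq_mul]
    rw [sum_congr rfl fun j hj => by rw [log_div (hq j hj i).ne' (hp i).ne', mul_sub],
      sum_sub_distrib, ← sum_mul, hω]
    ring
  calc ExpMap p (∑ j ∈ s, ω j • ExpInv p (q j))
      = expMap p (Rmap p u / p) := by simp only [ExpInv]; rw [sum_smul_Rmap]; rfl
    _ = expMap p u := expMap_congr (Rmap_div_eqUpToConst (fun i => (hp i).ne') u)
    _ = _ := by rw [expMap_eq_expMap_one hp, hlog]

end SimplexMaps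

theorem stmt10_general {n c : ℕ} (N : Fin n → Finset (Fin n)) (ω : Fin n → Fin n → ℝ)
    (D : Fin n → Fin c → ℝ) (ρ : ℝ)
    (hωsum : ∀ i, ∑ j ∈ N i, ω i j = 1)
    (W : Fin n → Fin c → ℝ) (hW : ∀ j, W j ∈ simplexS c) (i : Fin n) :
    ExpMap (W i) (∑ j ∈ N i, ω i j • ExpInv (W i) (expMap (W j) (-(ρ⁻¹ • D j)))) =
      Sim N ω D ρ W i := by
  have hL : ∀ j ∈ N i, ∀ k, 0 < expMap (W j) (-(ρ⁻¹ • D j)) k :=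
    fun j _ => expMap_pos (hW j).1 _
  rw [ExpMap_sum_smul_ExpInv (hW i).1 hL (hωsum i), Sim, expMap_bary]
  refine expMap_congr (EqUpToConst.sum_smul _ _ fun j _ => ?_)
  calc log ∘ expMap (W j) (-(ρ⁻¹ • D j))
      =ᶜ log ∘ W j + -(ρ⁻¹ • D j) := log_expMap_eqUpToConst (hW j).1 _
    _ =ᶜ expInv (bary c) (W j) + -(ρ⁻¹ • D j) :=
      ((expInv_eqUpToConst _ _).trans
        (log_div_bary_eqUpToConst fun k => ((hW j).1 k).ne')).symm.add_right _
    _ = _ := by rw [sub_eq_add_neg]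

theorem stmt10 {n c : ℕ} (N : Fin n → Finset (Fin n)) (ω : Fin n → Fin n → ℝ)
    (D : Fin n → Fin c → ℝ) (ρ : ℝ) (hρ : 0 < ρ)
    (hself : ∀ i, i ∈ N i)
    (hωpos : ∀ i, ∀ j ∈ N i, 0 < ω i j)
    (hωsum : ∀ i, ∑ j ∈ N i, ω i j = 1)
    (W : Fin n → Fin c → ℝ) (hW : ∀ j, W j ∈ simplexS c) (i : Fin n) :
    ExpMap (W i) (∑ j ∈ N i, ω i j • ExpInv (W i) (expMap (W j) (-(ρ⁻¹ • D j)))) =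
      Sim N ω D ρ W i :=
  stmt10_general N ω D ρ hωsum W hW i
end

section
/- The differential of the i-th component of the similarity map is dS_i(W)[X] = ∑_{j∈N_i} ω_{ij} R_{S_i(W)}[X_j / W_j] for all X ∈ T_0^n (componentwise division), where R_q[u] = q⊙u − ⟨q,u⟩q. -/
open Finset Real

/-!
`S_i` is `exp_𝟙` composed with the weighted sum of the maps `W ↦ exp_𝟙⁻¹(W_j) - D_j/ρ`.
The differential of `exp_p` at `v` is `R_{exp_p v}`, and that of `exp_p⁻¹` at `q` is
`x ↦ Π₀[x / q]`. Since `S_i(W)` is a probability vector, `R_{S_i(W)}` annihilates constant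
vectors, so it absorbs the projection `Π₀`, and the chain rule gives the formula.
-/

open ContinuousLinearMap

section Simplex

variable {c : ℕ}

lemma Rmap_add_const {q : Fin c → ℝ} (hq : ∑ k, q k = 1) (u : Fin c → ℝ) (a : ℝ) :
    Rmap q (fun k => u k + a) = Rmap q u := by
  funext i
  simp only [Rmap, mul_add, sum_add_distrib, ← sum_mul, hq]
  ring

lemma Rmap_proj0 {q : Fin c → ℝ} (hq : ∑ k, q k = 1) (u : Fin c → ℝ) :
    Rmap q (proj0 u) = Rmap q u :=
  (congrArg (Rmap q) (funext fun _ => sub_eq_add_neg _ _)).trans (Rmap_add_const hq u _)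

lemma sum_expMap {p v : Fin c → ℝ} (hZ : ∑ j, p j * exp (v j) ≠ 0) :
    ∑ i, expMap p v i = 1 := by
  simp only [expMap, ← sum_div, div_self hZ]

noncomputable def rmapCLM (q : Fin c → ℝ) : (Fin c → ℝ) →L[ℝ] (Fin c → ℝ) :=
  LinearMap.toContinuousLinearMap
    { toFun := Rmap q
      map_add' := fun u v => by
        funext i
        simp only [Rmap, Pi.add_apply, mul_add, sum_add_distrib]
        ring
      map_smul' := fun a u => by
        funext i
        simp only [Rmap, Pi.smul_apply, smul_eq_mul, RingHom.id_apply, mul_left_comm _ a,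
          ← mul_sum]
        ring }

@[simp]
lemma rmapCLM_apply (q u : Fin c → ℝ) : rmapCLM q u = Rmap q u := rfl

noncomputable def proj0CLM (c : ℕ) : (Fin c → ℝ) →L[ℝ] (Fin c → ℝ) :=
  LinearMap.toContinuousLinearMap
    { toFun := proj0
      map_add' := fun u v => by
        funext i
        simp only [proj0, Pi.add_apply, sum_add_distrib]
        ring
      map_smul' := fun a u => by
        funext i
        simp only [proj0, Pi.smul_apply, smul_eq_mul, RingHom.id_apply, ← mul_sum]
        ring }

@[simp]
lemma proj0CLM_apply (u : Fin c → ℝ) : proj0CLM c u = proj0 u := rfl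

noncomputable def divCLM (q : Fin c → ℝ) : (Fin c → ℝ) →L[ℝ] (Fin c → ℝ) :=
  LinearMap.toContinuousLinearMap
    { toFun := fun x k => x k / q k
      map_add' := fun u v => by
        funext k
        simp only [Pi.add_apply, add_div]
      map_smul' := fun a u => by
        funext k
        simp only [Pi.smul_apply, smul_eq_mul, RingHom.id_apply, mul_div_assoc] }

@[simp]
lemma divCLM_apply (q x : Fin c → ℝ) : divCLM q x = fun k => x k / q k := rfl

theorem hasFDerivAt_expMap {p v : Fin c → ℝ} (hZ : ∑ j, p j * exp (v j) ≠ 0) :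
    HasFDerivAt (expMap p) (rmapCLM (expMap p v)) v := by
  have hZ' : HasFDerivAt (fun w : Fin c → ℝ => ∑ j, p j * exp (w j))
      (∑ j, p j • exp (v j) • proj j) v :=
    HasFDerivAt.fun_sum fun j _ => (hasFDerivAt_apply j v).exp.const_mul (p j)
  refine hasFDerivAt_pi'' fun i => ?_
  have hi := ((hasFDerivAt_apply i v).exp.const_mul (p i)).fun_mul
    ((hasDerivAt_inv hZ).comp_hasFDerivAt v hZ')
  simp only [expMap, div_eq_mul_inv]
  refine hi.congr_fderiv ?_
  ext h
  have hsum : ∑ k, p k * exp (v k) * (∑ j, p j * exp (v j))⁻¹ * h k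
      = (∑ j, p j * exp (v j))⁻¹ * ∑ k, p k * (exp (v k) * h k) := by
    rw [mul_sum]
    exact sum_congr rfl fun k _ => by ring
  simp only [neg_smul, smul_neg, Function.comp_apply, add_apply, neg_apply, smul_apply,
    _root_.sum_apply, proj_apply, smul_eq_mul, comp_apply, rmapCLM_apply, Rmap, expMap,
    div_eq_mul_inv, hsum]
  ring

theorem hasFDerivAt_expInv {p q : Fin c → ℝ} (hp : ∀ k, p k ≠ 0) (hq : ∀ k, q k ≠ 0) :
    HasFDerivAt (expInv p) (proj0CLM c ∘L divCLM q) q := by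
  have hlog : HasFDerivAt (fun w : Fin c → ℝ => fun k => log (w k / p k)) (divCLM q) q := by
    refine hasFDerivAt_pi'' fun k => ?_
    have hk := ((hasFDerivAt_apply (𝕜 := ℝ) k q).mul_const (p k)⁻¹).log
      (div_ne_zero (hq k) (hp k))
    simp only [div_eq_mul_inv]
    refine hk.congr_fderiv ?_
    ext x
    simp only [mul_inv_rev, inv_inv, smul_apply, proj_apply, smul_eq_mul, comp_apply,
      divCLM_apply]
    field_simp [hp k]
  exact (proj0CLM c).hasFDerivAt.comp q hlog

end Simplex

theorem stmt11_general {n c : ℕ} (N : Fin n → Finset (Fin n)) (ω : Fin n → Fin n → ℝ)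
    (D : Fin n → Fin c → ℝ) (ρ : ℝ)
    (W : Fin n → Fin c → ℝ) (hW : ∀ j, W j ∈ simplexS c) (i : Fin n) :
    ∃ f' : (Fin n → Fin c → ℝ) →L[ℝ] (Fin c → ℝ),
      HasFDerivAt (fun V => Sim N ω D ρ V i) f' W ∧
      ∀ X : Fin n → Fin c → ℝ, (∀ j, X j ∈ T0 c) →
        f' X = ∑ j ∈ N i, ω i j • Rmap (Sim N ω D ρ W i) (fun k => X j k / W j k) := by
  have hc : 0 < c := Nat.pos_of_ne_zero fun hc => by
    subst hc
    simpa using (hW i).2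
  have hbary : ∀ k, 0 < bary c k := fun _ => one_div_pos.2 (Nat.cast_pos.2 hc)
  set v := fun V : Fin n → Fin c → ℝ =>
    ∑ j ∈ N i, ω i j • (expInv (bary c) (V j) - ρ⁻¹ • D j)
  set v' := ∑ j ∈ N i, ω i j • ((proj0CLM c ∘L divCLM (W j)) ∘L proj j)
  have hexpInv : ∀ j, HasFDerivAt (fun V : Fin n → Fin c → ℝ => expInv (bary c) (V j))
      ((proj0CLM c ∘L divCLM (W j)) ∘L proj j) W := fun j =>
    (hasFDerivAt_expInv (fun k => (hbary k).ne') fun k => ((hW j).1 k).ne').comp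
      (g := expInv (bary c)) W (hasFDerivAt_apply j W)
  have hv : HasFDerivAt v v' W := HasFDerivAt.fun_sum fun j _ =>
    ((hexpInv j).sub_const _).fun_const_smul _
  have hZ : ∑ k, bary c k * exp (v W k) ≠ 0 :=
    (sum_pos (fun k _ => mul_pos (hbary k) (exp_pos _)) ⟨⟨0, hc⟩, mem_univ _⟩).ne'
  refine ⟨rmapCLM (Sim N ω D ρ W i) ∘L v', (hasFDerivAt_expMap hZ).comp W hv, fun X _ => ?_⟩
  have hS : ∑ k, Sim N ω D ρ W i k = 1 := sum_expMap hZ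
  simp [v', Rmap_proj0 hS]

theorem stmt11 {n c : ℕ} (N : Fin n → Finset (Fin n)) (ω : Fin n → Fin n → ℝ)
    (D : Fin n → Fin c → ℝ) (ρ : ℝ) (hρ : 0 < ρ)
    (hself : ∀ i, i ∈ N i)
    (hωpos : ∀ i, ∀ j ∈ N i, 0 < ω i j)
    (hωsum : ∀ i, ∑ j ∈ N i, ω i j = 1)
    (W : Fin n → Fin c → ℝ) (hW : ∀ j, W j ∈ simplexS c) (i : Fin n) :
    ∃ f' : (Fin n → Fin c → ℝ) →L[ℝ] (Fin c → ℝ),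
      HasFDerivAt (fun V => Sim N ω D ρ V i) f' W ∧
      ∀ X : Fin n → Fin c → ℝ, (∀ j, X j ∈ T0 c) →
        f' X = ∑ j ∈ N i, ω i j • Rmap (Sim N ω D ρ W i) (fun k => X j k / W j k) :=
  stmt11_general N ω D ρ W hW i
end

section
/- If the averaging matrix Ω ∈ ℝ^{n×n} is symmetric, then the S-flow Ṡ = R_S[ΩS] is the Riemannian gradient descent flow of the potential J(S) = −(1/2)⟨S, ΩS⟩, i.e., R_S[ΩS] = −R_S[∇J(S)] where ∇J(S) = −ΩS is the Euclidean gradient. -/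
open Finset Real

/-!
The potential is `J(S) = -(1/2) B(S, S)` for the bilinear pairing `B(M, N) = ⟨M, Ω N⟩`. The
derivative of a quadratic form is `B(S, ·) + B(·, S)`, and symmetry of `Ω` makes `B` symmetric,
so `dJ(S) = -B(S, ·) = ⟨-Ω S, ·⟩`. Since `R_S` is linear, `R_S[Ω S] = -R_S[-Ω S]`.
-/

theorem ContinuousLinearMap.hasFDerivAt_apply_self {𝕜 E F : Type*} [NontriviallyNormedField 𝕜]
    [NormedAddCommGroup E] [NormedSpace 𝕜 E] [NormedAddCommGroup F] [NormedSpace 𝕜 F]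
    (B : E →L[𝕜] E →L[𝕜] F) (x : E) :
    HasFDerivAt (fun y => B y y) (B x + B.flip x) x := by
  refine (B.hasFDerivAt_of_bilinear (hasFDerivAt_id x) (hasFDerivAt_id x)).congr_fderiv ?_
  ext v
  simp

section Averaging

variable {n c : ℕ}

noncomputable def avgPairing (Ω : Matrix (Fin n) (Fin n) ℝ) :
    (Fin n → Fin c → ℝ) →L[ℝ] (Fin n → Fin c → ℝ) →L[ℝ] ℝ :=
  LinearMap.toContinuousBilinearMap <| LinearMap.mk₂ ℝ
    (fun M N => ∑ i, ∑ k, M i k * ∑ j, Ω i j * N j k)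
    (fun M M' N => by simp only [Pi.add_apply, add_mul, sum_add_distrib])
    (fun a M N => by simp only [Pi.smul_apply, smul_eq_mul, mul_sum, mul_assoc])
    (fun M N N' => by simp only [Pi.add_apply, mul_add, sum_add_distrib])
    (fun a M N => by simp only [Pi.smul_apply, smul_eq_mul, mul_sum, mul_left_comm _ a])

theorem avgPairing_apply (Ω : Matrix (Fin n) (Fin n) ℝ) (M N : Fin n → Fin c → ℝ) :
    avgPairing Ω M N = ∑ i, ∑ k, M i k * ∑ j, Ω i j * N j k :=
  rfl

theorem avgPairing_comm {Ω : Matrix (Fin n) (Fin n) ℝ} (hΩ : Ω.IsSymm) (M N : Fin n → Fin c → ℝ) :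
    avgPairing Ω M N = avgPairing Ω N M := by
  simp only [avgPairing_apply, mul_sum]
  simp_rw [sum_comm (s := (univ : Finset (Fin c))) (t := (univ : Finset (Fin n)))]
  rw [sum_comm]
  refine sum_congr rfl fun i _ => sum_congr rfl fun j _ => sum_congr rfl fun k _ => ?_
  rw [hΩ.apply i j]
  ring

end Averaging

theorem Rmap_neg {c : ℕ} (q u : Fin c → ℝ) : Rmap q (-u) = -Rmap q u := by
  ext i
  simp only [Rmap, Pi.neg_apply, mul_neg, sum_neg_distrib]
  ring

theorem stmt17_general {n c : ℕ} (Ω : Matrix (Fin n) (Fin n) ℝ) (hΩ : Ω.IsSymm)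
    (S : Fin n → Fin c → ℝ) :
    ∃ f' : (Fin n → Fin c → ℝ) →L[ℝ] ℝ,
      HasFDerivAt (fun M : Fin n → Fin c → ℝ =>
          -(1/2) * ∑ i, ∑ k, M i k * (∑ j, Ω i j * M j k)) f' S ∧
      (∀ V : Fin n → Fin c → ℝ, f' V = ∑ i, ∑ k, (-(∑ j, Ω i j * S j k)) * V i k) ∧
      (∀ i, Rmap (S i) (fun k => ∑ j, Ω i j * S j k) =
        -(Rmap (S i) (fun k => -(∑ j, Ω i j * S j k)))) := by
  refine ⟨-(1/2 : ℝ) • (avgPairing Ω S + (avgPairing Ω).flip S),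
    ((avgPairing Ω).hasFDerivAt_apply_self S).const_mul _, fun V => ?_, fun i => ?_⟩
  · simp only [_root_.smul_apply, _root_.add_apply,
      ContinuousLinearMap.flip_apply, smul_eq_mul, avgPairing_comm hΩ S V]
    simp only [avgPairing_apply, neg_mul, sum_neg_distrib, mul_comm (V _ _)]
    ring
  · exact (neg_neg _).symm.trans (congrArg Neg.neg (Rmap_neg _ _).symm)

theorem stmt17 {n c : ℕ} (Ω : Matrix (Fin n) (Fin n) ℝ) (hΩ : Ω.IsSymm)
    (S : Fin n → Fin c → ℝ) (hS : ∀ i, S i ∈ simplexS c) :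
    ∃ f' : (Fin n → Fin c → ℝ) →L[ℝ] ℝ,
      HasFDerivAt (fun M : Fin n → Fin c → ℝ =>
          -(1/2) * ∑ i, ∑ k, M i k * (∑ j, Ω i j * M j k)) f' S ∧
      (∀ V : Fin n → Fin c → ℝ, f' V = ∑ i, ∑ k, (-(∑ j, Ω i j * S j k)) * V i k) ∧
      (∀ i, Rmap (S i) (fun k => ∑ j, Ω i j * S j k) =
        -(Rmap (S i) (fun k => -(∑ j, Ω i j * S j k)))) :=
  stmt17_general Ω hΩ S
end

section
/- For p ∈ S with p_k = p_l, u = e_k − e_l, and any vector d ∈ ℝ^c with d_k < d_l, the difference R_p[(u ⊙ e^{−d})/p] − Π_0[(e^{−d}/p) ⊙ R_p[u]] equals (e^{−d_k} − e^{−d_l})(𝟙ₛ − p), which is nonzero whenever p ≠ 𝟙ₛ. -/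
open Finset Real

theorem stmt19 {c : ℕ} (hc : 3 ≤ c) (p : Fin c → ℝ) (hp : p ∈ simplexS c)
    (k l : Fin c) (hpkl : p k = p l) (d : Fin c → ℝ) (hd : d k < d l) :
    letI u : Fin c → ℝ := fun i => (if i = k then (1:ℝ) else 0) - (if i = l then (1:ℝ) else 0)
    (Rmap p (fun i => u i * Real.exp (-(d i)) / p i)
        - proj0 (fun i => Real.exp (-(d i)) / p i * Rmap p u i)
      = (Real.exp (-(d k)) - Real.exp (-(d l))) • (bary c - p)) ∧
    (p ≠ bary c →
      Rmap p (fun i => u i * Real.exp (-(d i)) / p i)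
        - proj0 (fun i => Real.exp (-(d i)) / p i * Rmap p u i) ≠ 0) := by
  set u : Fin c → ℝ := fun i => (if i = k then (1:ℝ) else 0) - (if i = l then (1:ℝ) else 0)
    with hu_def
  beta_reduce
  obtain ⟨hpos, hsum⟩ := hp
  have hkl : k ≠ l := by rintro rfl; exact lt_irrefl _ hd
  have hpne : ∀ i, p i ≠ 0 := fun i => (hpos i).ne'
  have hSu : ∑ j, u j * Real.exp (-(d j)) = Real.exp (-(d k)) - Real.exp (-(d l)) := by
    simp only [u, sub_mul, ite_mul, one_mul, zero_mul]
    rw [Finset.sum_sub_distrib]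
    simp
  have hSpu : ∑ j, p j * u j = 0 := by
    simp only [u, mul_sub, mul_ite, mul_one, mul_zero]
    rw [Finset.sum_sub_distrib]
    simp [hpkl]
  have hR : ∀ j, Rmap p u j = p j * u j := by
    intro j; simp [Rmap, hSpu]
  have haux : ∀ (a e q : ℝ), q ≠ 0 → e / q * (q * a) = a * e := by
    intros a e q hq; field_simp
  have haux2 : ∀ (a q : ℝ), q ≠ 0 → q * (a / q) = a := by
    intros a q hq; field_simp
  have hw : ∀ j, Real.exp (-(d j)) / p j * Rmap p u j = u j * Real.exp (-(d j)) := by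
    intro j; rw [hR]; exact haux _ _ _ (hpne j)
  have h1 : ∀ j, p j * (u j * Real.exp (-(d j)) / p j) = u j * Real.exp (-(d j)) := by
    intro j; exact haux2 _ _ (hpne j)
  have key : Rmap p (fun i => u i * Real.exp (-(d i)) / p i)
        - proj0 (fun i => Real.exp (-(d i)) / p i * Rmap p u i)
      = (Real.exp (-(d k)) - Real.exp (-(d l))) • (bary c - p) := by
    funext i
    simp only [Pi.sub_apply, Pi.smul_apply, smul_eq_mul, proj0, bary]
    simp only [hw]
    simp only [Rmap]
    simp only [h1, hSu]
    ring
  refine ⟨key, fun hne => ?_⟩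
  rw [key]
  refine smul_ne_zero (sub_ne_zero.mpr (ne_of_gt (Real.exp_lt_exp.mpr (by linarith)))) ?_
  exact sub_ne_zero.mpr (Ne.symm hne)
end
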